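/- Let k ≥ 3, let A be a first-order expansion of a k-neoliberal relational structure B, let C ⊆ A^k be non-empty, and let φ be a (C,u,C,v)-implication in A with proj_u(φ^A) = proj_v(φ^A) =: E. Then there exist strongly connected components S1 ⊆ Vert(C) and S2 ⊆ Vert(E∖C) of the digraph B_φ such that S1 is a sink in B_φ and S2 is a source in B_φ. Moreover, every vertex of B_φ has an outgoing and an incoming arc, i.e., B_φ is smooth. -/

import Mathlib

open Function Set

namespace CSPPaper

/-- A relational signature: a type of relation symbols together with arities. -/
structure Sig where
  ι : Type
  arity : ι → ℕ

/-- A relational structure with signature `σ` on domain `A`. -/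
structure StructOn (σ : Sig) (A : Type) where
  rel : ∀ i : σ.ι, Set (Fin (σ.arity i) → A)

variable {A : Type} {σ σ' : Sig}

/-! ### Homomorphisms and embeddings between relational structures -/

def IsHom {B : Type} (X : StructOn σ A) (Y : StructOn σ B) (h : A → B) : Prop :=
  ∀ i, ∀ t ∈ X.rel i, (h ∘ t) ∈ Y.rel i

def IsEmbeddingHom {B : Type} (X : StructOn σ A) (Y : StructOn σ B) (h : A → B) : Prop :=
  Function.Injective h ∧ ∀ i, ∀ t : Fin (σ.arity i) → A, t ∈ X.rel i ↔ (h ∘ t) ∈ Y.rel i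

def Embeds {B : Type} (X : StructOn σ A) (Y : StructOn σ B) : Prop :=
  ∃ h, IsEmbeddingHom X Y h

def Isomorphic {B : Type} (X : StructOn σ A) (Y : StructOn σ B) : Prop :=
  ∃ h, Function.Bijective h ∧ IsEmbeddingHom X Y h

/-- A finite `σ`-structure, with domain `Fin m` for some `m`. -/
def FinStructOn (σ : Sig) : Type := Σ m : ℕ, StructOn σ (Fin m)

/-- `Y` is a homomorphic image of `X`. -/
def IsHomImage (X Y : FinStructOn σ) : Prop :=
  ∃ h : Fin X.1 → Fin Y.1, Function.Surjective h ∧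
    ∀ i, Y.2.rel i = (fun t => h ∘ t) '' X.2.rel i

/-- The substructure of `X` induced on a subset `S` of its domain. -/
def inducedSub {B : Type} (X : StructOn σ B) (S : Set B) : StructOn σ ↥S :=
  ⟨fun i => {t | (fun j => (t j : B)) ∈ X.rel i}⟩

/-! ### Finite boundedness and finite duality -/

/-- `F` is a finite list of bounds witnessing finite boundedness of `S`. -/
def IsBoundWitness (S : StructOn σ A) (F : List (FinStructOn σ)) : Prop :=
  ∀ C : FinStructOn σ, (∀ X ∈ F, ¬ Embeds X.2 C.2) → Embeds C.2 S

def FinitelyBounded (S : StructOn σ A) : Prop := ∃ F, IsBoundWitness S F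

/-- `b = b_S`: the least possible size of the biggest structure in a witnessing family. -/
def IsBoundSize (S : StructOn σ A) (b : ℕ) : Prop :=
  IsLeast {b' : ℕ | ∃ F, IsBoundWitness S F ∧ ∀ X ∈ F, X.1 ≤ b'} b

/-- `S` has finite duality: it is finitely bounded with a witnessing family closed under
homomorphic images. -/
def FiniteDuality (S : StructOn σ A) : Prop :=
  ∃ F, IsBoundWitness S F ∧
    ∀ X ∈ F, ∀ Y : FinStructOn σ, IsHomImage X Y → ∃ X' ∈ F, Isomorphic X'.2 Y.2

/-! ### Permutation groups -/

def orbitOf (G : Subgroup (Equiv.Perm A)) {n : ℕ} (t : Fin n → A) : Set (Fin n → A) :=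
  {s | ∃ g ∈ G, s = ⇑g ∘ t}

def IsGOrbit (G : Subgroup (Equiv.Perm A)) {n : ℕ} (O : Set (Fin n → A)) : Prop :=
  ∃ t, O = orbitOf G t

def Oligomorphic (G : Subgroup (Equiv.Perm A)) : Prop :=
  ∀ n : ℕ, {O : Set (Fin n → A) | IsGOrbit G O}.Finite

/-- `G` is `m`-transitive: one orbit on injective `m`-tuples. -/
def MTransitive (G : Subgroup (Equiv.Perm A)) (m : ℕ) : Prop :=
  ∀ s t : Fin m → A, Function.Injective s → Function.Injective t →
    ∃ g ∈ G, ⇑g ∘ s = t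

/-- `G` is `k`-homogeneous: for every `ℓ ≥ k`, the orbit of every `ℓ`-tuple is determined
by the orbits of its `k`-subtuples. -/
def KHomogeneous (G : Subgroup (Equiv.Perm A)) (k : ℕ) : Prop :=
  ∀ ℓ : ℕ, k ≤ ℓ → ∀ s t : Fin ℓ → A,
    (∀ p : Fin k → Fin ℓ, orbitOf G (s ∘ p) = orbitOf G (t ∘ p)) →
    orbitOf G s = orbitOf G t

/-- `G` has no `k`-algebraicity: the only fixed points of any pointwise stabilizer by
`k-1` elements are these elements themselves. -/
def NoKAlgebraicity (G : Subgroup (Equiv.Perm A)) (k : ℕ) : Prop :=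
  ∀ (a : Fin (k - 1) → A) (b : A),
    (∀ g ∈ G, (∀ i, g (a i) = a i) → g b = b) → ∃ i, b = a i

def Neoliberal (G : Subgroup (Equiv.Perm A)) (k : ℕ) : Prop :=
  Oligomorphic G ∧ MTransitive G (k - 1) ∧ KHomogeneous G k ∧ NoKAlgebraicity G k

/-- The signature of the canonical `k`-ary structure of `G`: one `k`-ary symbol for each
orbit of `k`-tuples. -/
def canonSig (G : Subgroup (Equiv.Perm A)) (k : ℕ) : Sig :=
  ⟨{O : Set (Fin k → A) // IsGOrbit G O}, fun _ => k⟩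

/-- The canonical `k`-ary structure of `G`. -/
def canonStruct (G : Subgroup (Equiv.Perm A)) (k : ℕ) : StructOn (canonSig G k) A :=
  ⟨fun O => O.1⟩

/-! ### First-order definability (via Mathlib's model theory) -/

def sigLang (σ : Sig) : FirstOrder.Language :=
  { Functions := fun _ => Empty, Relations := fun n => {i : σ.ι // σ.arity i = n} }

def structureOf (S : StructOn σ A) : (sigLang σ).Structure A where
  funMap := fun f _ => f.elim
  RelMap := fun r t => (fun j => t (Fin.cast r.2 j)) ∈ S.rel r.1

/-- `R` is first-order definable in the structure `S` (without parameters). -/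
def foDefinable (S : StructOn σ A) {α : Type} (R : Set (α → A)) : Prop :=
  letI := structureOf S
  Set.Definable (∅ : Set A) (sigLang σ) R

/-- `T` is a first-order expansion of `S`: all relations of `S` are among those of `T`,
and every relation of `T` is first-order definable in `S`. -/
def IsFOExpansion (S : StructOn σ A) (T : StructOn σ' A) : Prop :=
  (∃ (j : σ.ι → σ'.ι) (h : ∀ i, σ'.arity (j i) = σ.arity i),
    ∀ i, T.rel (j i) = {t | (t ∘ Fin.cast (h i).symm) ∈ S.rel i}) ∧
  ∀ i' : σ'.ι, foDefinable S (T.rel i')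

/-! ### Primitive positive definability -/

/-- `R ⊆ A^α` is definable by a primitive positive formula over the signature of `S`:
there are existentially quantified extra variables `Fin m`, a finite list of atomic
constraints (relation symbols applied to variables) and a finite list of equality atoms,
whose satisfying assignments project to `R`. -/
def ppDefinable (S : StructOn σ A) {α : Type} (R : Set (α → A)) : Prop :=
  ∃ (m : ℕ) (atoms : List ((i : σ.ι) × (Fin (σ.arity i) → α ⊕ Fin m)))
    (eqs : List ((α ⊕ Fin m) × (α ⊕ Fin m))),
    R = {t | ∃ e : Fin m → A,
      (∀ c ∈ atoms, (Sum.elim t e ∘ c.2) ∈ S.rel c.1) ∧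
      ∀ p ∈ eqs, Sum.elim t e p.1 = Sum.elim t e p.2}

/-! ### Polymorphisms and automorphisms -/

def Preserves {n m : ℕ} (f : (Fin n → A) → A) (R : Set (Fin m → A)) : Prop :=
  ∀ ts : Fin n → Fin m → A, (∀ j, ts j ∈ R) → (fun i => f fun j => ts j i) ∈ R

def IsPolymorphism (S : StructOn σ A) {n : ℕ} (f : (Fin n → A) → A) : Prop :=
  ∀ i, Preserves f (S.rel i)

def HasBinaryInjection (S : StructOn σ A) : Prop :=
  ∃ f : (Fin 2 → A) → A, IsPolymorphism S f ∧ Function.Injective f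

def IsAuto (S : StructOn σ A) (g : A → A) : Prop :=
  Function.Bijective g ∧ ∀ i, ∀ t : Fin (σ.arity i) → A, t ∈ S.rel i ↔ (g ∘ t) ∈ S.rel i

def autOrbit (S : StructOn σ A) {n : ℕ} (t : Fin n → A) : Set (Fin n → A) :=
  {s | ∃ g, IsAuto S g ∧ s = g ∘ t}

def IsAutOrbit (S : StructOn σ A) {n : ℕ} (O : Set (Fin n → A)) : Prop :=
  ∃ t, O = autOrbit S t

def OmegaCategorical (S : StructOn σ A) : Prop :=
  ∀ n : ℕ, {O : Set (Fin n → A) | IsAutOrbit S O}.Finite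

def Oligopotent (S : StructOn σ A) {n : ℕ} (f : (Fin n → A) → A) : Prop :=
  ∀ B' : Set A, B'.Finite → ∃ α : A → A, IsAuto S α ∧ ∀ b ∈ B', f (fun _ => b) = α b

/-- `f` is a quasi near-unanimity operation. -/
def IsQNU {n : ℕ} (f : (Fin n → A) → A) : Prop :=
  ∀ a b : A, ∀ j : Fin n, f (Function.update (fun _ => b) j a) = f (fun _ => a)

/-! ### CSP instances, minimality, relational width, strict width -/

structure Constraint (A V : Type) where
  scope : Set V
  val : Set (↥scope → A)

structure Instance (A V : Type) where
  cons : Set (Constraint A V)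
  fin : cons.Finite

def Instance.Solution {V : Type} (I : Instance A V) (f : V → A) : Prop :=
  ∀ C ∈ I.cons, (fun x : ↥C.scope => f x.1) ∈ C.val

def Instance.NonTrivial {V : Type} (I : Instance A V) : Prop :=
  ∀ C ∈ I.cons, C.val.Nonempty

/-- Projection of a constraint onto a tuple of variables from its scope. -/
def Constraint.projOn {V : Type} {m : ℕ} (C : Constraint A V) (u : Fin m → V)
    (h : ∀ j, u j ∈ C.scope) : Set (Fin m → A) :=
  {t | ∃ f ∈ C.val, ∀ j, t j = f ⟨u j, h j⟩}

/-- `(k,ℓ)`-minimality of an instance. -/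
def Instance.Minimal {V : Type} (I : Instance A V) (k ℓ : ℕ) : Prop :=
  (∀ m ≤ ℓ, ∀ t : Fin m → V, ∃ C ∈ I.cons, ∀ j, t j ∈ C.scope) ∧
  (∀ m ≤ k, ∀ u : Fin m → V, ∀ C1 ∈ I.cons, ∀ C2 ∈ I.cons,
    ∀ (h1 : ∀ j, u j ∈ C1.scope) (h2 : ∀ j, u j ∈ C2.scope),
      C1.projOn u h1 = C2.projOn u h2)

/-- `I` is an instance of `CSP(S)`: every constraint is, under some enumeration of its
scope, a relation of `S`. -/
def Instance.OfCSP {V : Type} (S : StructOn σ A) (I : Instance A V) : Prop :=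
  ∀ C ∈ I.cons, ∃ (i : σ.ι) (e : Fin (σ.arity i) ≃ ↥C.scope),
    C.val = {f | (fun j => f (e j)) ∈ S.rel i}

/-- `I` is an instance of `CSP_inj(S)`: an instance of `CSP(S)` all of whose constraints
project onto pairs of distinct variables into the injective pairs. -/
def Instance.OfInjCSP {V : Type} (S : StructOn σ A) (I : Instance A V) : Prop :=
  I.OfCSP S ∧ ∀ C ∈ I.cons, ∀ x y : ↥C.scope, x.1 ≠ y.1 → ∀ f ∈ C.val, f x ≠ f y

def Instance.EquivTo {V : Type} (I J : Instance A V) : Prop :=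
  ∀ f : V → A, I.Solution f ↔ J.Solution f

/-- `S` has relational width `(k,ℓ)`. -/
def RelWidth (S : StructOn σ A) (k ℓ : ℕ) : Prop :=
  ∀ (V : Type), Finite V → ∀ I : Instance A V, I.NonTrivial → I.Minimal k ℓ →
    (∃ J : Instance A V, J.OfCSP S ∧ I.EquivTo J) → ∃ f, I.Solution f

/-- `CSP_inj(S)` has relational width `(k,ℓ)`. -/
def RelWidthInj (S : StructOn σ A) (k ℓ : ℕ) : Prop :=
  ∀ (V : Type), Finite V → ∀ I : Instance A V, I.NonTrivial → I.Minimal k ℓ →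
    (∃ J : Instance A V, J.OfInjCSP S ∧ I.EquivTo J) → ∃ f, I.Solution f

/-- `S` has strict width `k`. -/
def StrictWidth (S : StructOn σ A) (k : ℕ) : Prop :=
  ∃ ℓ : ℕ, k < ℓ ∧ ∀ (V : Type), Finite V → ∀ I : Instance A V,
    I.OfCSP S → I.Minimal k ℓ → ∀ (U : Set V) (g : ↥U → A),
      (∀ C ∈ I.cons, ∃ h ∈ C.val, ∀ (x : V) (hU : x ∈ U) (hC : x ∈ C.scope),
        g ⟨x, hU⟩ = h ⟨x, hC⟩) →
      ∃ f, I.Solution f ∧ ∀ x : ↥U, f x.1 = g x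

def BoundedStrictWidth (S : StructOn σ A) : Prop :=
  ∃ k : ℕ, 1 ≤ k ∧ StrictWidth S k

/-! ### Implications -/

/-- Projection of a set of assignments onto a tuple of variables. -/
def proj {V : Type} {k : ℕ} (u : Fin k → V) (Φ : Set (V → A)) : Set (Fin k → A) :=
  (fun f => f ∘ u) '' Φ

/-- The data of a pp-formula with distinguished tuples of variables `u`, `v`:
a variable set `V`, the set `Φ` of satisfying assignments, and the tuples. -/
structure ImplData (A : Type) (k m : ℕ) where
  V : Type
  Φ : Set (V → A)
  u : Fin k → V
  v : Fin m → V

variable {k m n : ℕ}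

/-- `φ` is a `(C,u,D,v)`-pre-implication in `S` (items (2)-(5) of the definition of an
implication, together with the ambient conditions of that definition). -/
structure ImplData.IsPreImplication (φ : ImplData A k m) (S : StructOn σ A)
    (C : Set (Fin k → A)) (D : Set (Fin m → A)) : Prop where
  finV : Finite φ.V
  u_inj : Function.Injective φ.u
  v_inj : Function.Injective φ.v
  hk : k < Nat.card φ.V
  hm : m < Nat.card φ.V
  cover : Set.range φ.u ∪ Set.range φ.v = Set.univ
  C_ne : C.Nonempty
  D_ne : D.Nonempty
  C_pp : ppDefinable S C
  D_pp : ppDefinable S D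
  Φ_pp : ppDefinable S φ.Φ
  C_proper : C ⊂ proj φ.u φ.Φ
  D_proper : D ⊂ proj φ.v φ.Φ
  forward : ∀ f ∈ φ.Φ, f ∘ φ.u ∈ C → f ∘ φ.v ∈ D
  surj : ∀ a ∈ D, ∃ f ∈ φ.Φ, f ∘ φ.u ∈ C ∧ f ∘ φ.v = a

/-- `φ` is a `(C,u,D,v)`-implication in `S`. -/
def ImplData.IsImplication (φ : ImplData A k m) (S : StructOn σ A)
    (C : Set (Fin k → A)) (D : Set (Fin m → A)) : Prop :=
  φ.IsPreImplication S C D ∧ ∀ x y : φ.V, x ≠ y → ∃ f ∈ φ.Φ, f x ≠ f y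

/-- The implication `φ` is injective: all its satisfying assignments are injective. -/
def ImplData.Injective' (φ : ImplData A k m) : Prop :=
  ∀ f ∈ φ.Φ, Function.Injective f

/-- `f` is an `OP`-mapping of `φ`. -/
def ImplData.IsOPMap (φ : ImplData A k m) (O : Set (Fin k → A)) (P : Set (Fin m → A))
    (f : φ.V → A) : Prop :=
  f ∈ φ.Φ ∧ f ∘ φ.u ∈ O ∧ f ∘ φ.v ∈ P

/-- Restriction of `φ` to its injective satisfying assignments. -/
def ImplData.injRestrict (φ : ImplData A k m) : ImplData A k m :=
  ⟨φ.V, {f ∈ φ.Φ | Function.Injective f}, φ.u, φ.v⟩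

/-! ### Composition of implications -/

/-- The identification of the second distinguished tuple of `φ1` with the first
distinguished tuple of `φ2` (i.e. the renaming `v1 = u2` with no other shared
variables). -/
def compRel (φ1 : ImplData A k m) (φ2 : ImplData A m n) :
    (φ1.V ⊕ φ2.V) → (φ1.V ⊕ φ2.V) → Prop :=
  fun x y => ∃ i : Fin m, x = Sum.inl (φ1.v i) ∧ y = Sum.inr (φ2.u i)

/-- The composition `φ1 ∘ φ2`: the conjunction `φ1 ∧ φ2` (with `v1` renamed to `u2`),
with all variables not among the entries of `u1` and `v2` existentially quantified. -/
def ImplData.comp (φ1 : ImplData A k m) (φ2 : ImplData A m n) : ImplData A k n where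
  V := {q : Quot (compRel φ1 φ2) //
        q ∈ Set.range (fun x => Quot.mk (compRel φ1 φ2) (Sum.inl (φ1.u x))) ∪
            Set.range (fun x => Quot.mk (compRel φ1 φ2) (Sum.inr (φ2.v x)))}
  Φ := {f | ∃ h : Quot (compRel φ1 φ2) → A,
        (fun x => h (Quot.mk (compRel φ1 φ2) (Sum.inl x))) ∈ φ1.Φ ∧
        (fun x => h (Quot.mk (compRel φ1 φ2) (Sum.inr x))) ∈ φ2.Φ ∧
        ∀ q, f q = h q.1}
  u := fun i => ⟨Quot.mk (compRel φ1 φ2) (Sum.inl (φ1.u i)),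
        Set.mem_union_left _ (Set.mem_range_self i)⟩
  v := fun i => ⟨Quot.mk (compRel φ1 φ2) (Sum.inr (φ2.v i)),
        Set.mem_union_right _ (Set.mem_range_self i)⟩

/-- `ψ^{∘n}`: the `n`-fold composition of `ψ` with itself (`ψ` appears `n` times). -/
def ImplData.pow (ψ : ImplData A k k) : ℕ → ImplData A k k
  | 0 => ψ
  | 1 => ψ
  | (n + 2) => (ImplData.pow ψ (n + 1)).comp ψ

/-! ### The digraph of an implication -/

/-- The vertex set `Vert(E)`: orbits under `Aut(B)` contained in `E`. -/
def VertOf (Bstr : StructOn σ A) {k : ℕ} (E : Set (Fin k → A)) : Set (Set (Fin k → A)) :=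
  {O | IsAutOrbit Bstr O ∧ O ⊆ E}

/-- The arc relation of the digraph `B_φ` on `Vert(E)`. -/
def ArcOn (Bstr : StructOn σ A) (φ : ImplData A k k) (E : Set (Fin k → A))
    (O P : Set (Fin k → A)) : Prop :=
  O ∈ VertOf Bstr E ∧ P ∈ VertOf Bstr E ∧ ∃ f, φ.IsOPMap O P f

/-- `Scc` is a strongly connected component of `B_φ`. -/
def IsSCC (Bstr : StructOn σ A) (φ : ImplData A k k) (E : Set (Fin k → A))
    (Scc : Set (Set (Fin k → A))) : Prop :=
  Scc ⊆ VertOf Bstr E ∧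
  (∀ O ∈ Scc, ∀ P ∈ Scc, Relation.TransGen (ArcOn Bstr φ E) O P) ∧
  ∀ S' : Set (Set (Fin k → A)), Scc ⊆ S' → S' ⊆ VertOf Bstr E →
    (∀ O ∈ S', ∀ P ∈ S', Relation.TransGen (ArcOn Bstr φ E) O P) → S' = Scc

def IsSink (Bstr : StructOn σ A) (φ : ImplData A k k) (E : Set (Fin k → A))
    (Scc : Set (Set (Fin k → A))) : Prop :=
  ∀ O ∈ Scc, ∀ P, ArcOn Bstr φ E O P → P ∈ Scc

def IsSource (Bstr : StructOn σ A) (φ : ImplData A k k) (E : Set (Fin k → A))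
    (Scc : Set (Set (Fin k → A))) : Prop :=
  ∀ P ∈ Scc, ∀ O, ArcOn Bstr φ E O P → O ∈ Scc

/-- `φ` is a complete implication (with respect to the ground structure `Bstr`). -/
def IsComplete (Bstr : StructOn σ A) (φ : ImplData A k k) : Prop :=
  proj φ.u φ.Φ = proj φ.v φ.Φ ∧
  Nat.card (φ.comp φ).V = Nat.card φ.V ∧
  (∀ i : Fin k, φ.u i ∈ Set.range φ.v → φ.u i = φ.v i) ∧
  ∀ Scc, IsSCC Bstr φ (proj φ.u φ.Φ) Scc →
    ∀ O ∈ Scc, ∀ P ∈ Scc, ArcOn Bstr φ (proj φ.u φ.Φ) O P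

/-! ### The injective implication graph -/

/-- `(C1, C)` (given as `(P.1, P.2)`) is a vertex of the `k`-ary injective implication
graph of `S`. -/
def InjVertex (S : StructOn σ A) (k : ℕ) (P : Set (Fin k → A) × Set (Fin k → A)) : Prop :=
  P.2.Nonempty ∧ P.2 ⊂ P.1 ∧ ppDefinable S P.1 ∧ ppDefinable S P.2 ∧
    ∀ t ∈ P.2, Function.Injective t

/-- Arc of the `k`-ary injective implication graph of `S`. -/
def InjImplArc (S : StructOn σ A) (k : ℕ)
    (P Q : Set (Fin k → A) × Set (Fin k → A)) : Prop :=
  InjVertex S k P ∧ InjVertex S k Q ∧ P ≠ Q ∧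
  ∃ φ : ImplData A k k, φ.IsImplication S P.2 Q.2 ∧ φ.Injective' ∧
    proj φ.u φ.Φ = P.1 ∧ proj φ.v φ.Φ = Q.1

/-- `S` is implicationally simple on injective instances: the `k`-ary injective
implication graph of `S` is acyclic (contains no directed cycle). -/
def ImplSimpleInj (S : StructOn σ A) (k : ℕ) : Prop :=
  ¬ ∃ (nn : ℕ) (p : ℕ → Set (Fin k → A) × Set (Fin k → A)),
      0 < nn ∧ p 0 = p nn ∧ ∀ i < nn, InjImplArc S k (p i) (p (i + 1))

/-! ### Critical formulas -/

/-- `φ` is critical in `S` over `(C, D, φ.u, φ.v)`. -/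
structure IsCritical (S : StructOn σ A) (φ : ImplData A k k)
    (C D : Set (Fin k → A)) : Prop where
  disj : Disjoint C D
  C_inj : ∀ t ∈ C, Function.Injective t
  D_inj : ∀ t ∈ D, Function.Injective t
  D_pp : ppDefinable S D
  card_V : Nat.card φ.V = k + 1
  kpos : 0 < k
  u0 : φ.u ⟨0, kpos⟩ ∉ Set.range φ.u ∩ Set.range φ.v
  v0 : φ.v ⟨0, kpos⟩ ∉ Set.range φ.u ∩ Set.range φ.v
  impl : φ.IsImplication S C C
  D_proper_u : D ⊂ proj φ.u φ.Φ
  proju_inj : ∀ t ∈ proj φ.u φ.Φ, Function.Injective t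
  D_proper_v : D ⊂ proj φ.v φ.Φ
  projv_inj : ∀ t ∈ proj φ.v φ.Φ, Function.Injective t
  surjD : ∀ a ∈ D, ∃ f ∈ φ.Φ, f ∘ φ.u ∈ D ∧ f ∘ φ.v = a

/-! ### Boolean combinations -/

inductive BoolComb {β : Type} (basic : Set (Set β)) : Set β → Prop
  | of (s : Set β) (hs : s ∈ basic) : BoolComb basic s
  | univ : BoolComb basic Set.univ
  | compl (s : Set β) : BoolComb basic s → BoolComb basic sᶜ
  | inter (s t : Set β) : BoolComb basic s → BoolComb basic t → BoolComb basic (s ∩ t)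

end CSPPaper

/-!
The relations of `A` are first-order definable in `B`, so every pp-definable relation of `A`
(in particular `φ^A`, `C` and `E`) is invariant under `Aut(B)` and is a union of orbits. Hence
an arc leaving an orbit inside `C` ends in an orbit meeting `C`, that is, inside `C` (item (4));
dually an arc entering an orbit inside `E ∖ C` starts inside `E ∖ C`. Because
`proj_u φ^A = proj_v φ^A`, every orbit in `E` has an outgoing and an incoming arc, and
oligomorphicity makes `B_φ` finite. In a finite digraph, a nonempty vertex set closed under
successors in which every vertex has a successor contains a sink component: the set of vertices
reachable from a vertex with the fewest reachable vertices. Dually for sources.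
-/

namespace CSPPaper

open Relation

section Digraph

variable {α : Type} {r : α → α → Prop}

def IsStronglyConnected (r : α → α → Prop) (S : Set α) : Prop :=
  ∀ x ∈ S, ∀ y ∈ S, TransGen r x y

lemma isStronglyConnected_swap {S : Set α} :
    IsStronglyConnected (swap r) S ↔ IsStronglyConnected r S :=
  ⟨fun h x hx y hy => transGen_swap.mp (h y hy x hx),
    fun h x hx y hy => transGen_swap.mpr (h y hy x hx)⟩

lemma mem_of_transGen {W : Set α} (hW : ∀ x ∈ W, ∀ y, r x y → y ∈ W) {x y : α}
    (h : TransGen r x y) (hx : x ∈ W) : y ∈ W := by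
  induction h with
  | single h => exact hW _ hx _ h
  | tail _ h ih => exact hW _ ih _ h

lemma exists_sink_component {W : Set α} (hfin : W.Finite) (hne : W.Nonempty)
    (hW : ∀ x ∈ W, ∀ y, r x y → y ∈ W) (hsucc : ∀ x ∈ W, ∃ y, r x y) :
    ∃ S ⊆ W, IsStronglyConnected r S ∧
      (∀ S', S ⊆ S' → IsStronglyConnected r S' → S' = S) ∧ ∀ x ∈ S, ∀ y, r x y → y ∈ S := by
  have hreach : ∀ x ∈ W, {y | TransGen r x y} ⊆ W := fun x hx y hy => mem_of_transGen hW hy hx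
  obtain ⟨p, hpW, hmin⟩ := W.exists_min_image (fun x => {y | TransGen r x y}.ncard) hfin hne
  have hstable : ∀ y, TransGen r p y → {z | TransGen r y z} = {z | TransGen r p z} :=
    fun y hy => Set.eq_of_subset_of_ncard_le (fun z hz => hy.trans hz)
      (hmin y (hreach p hpW hy)) (hfin.subset (hreach p hpW))
  obtain ⟨q, hpq⟩ := hsucc p hpW
  refine ⟨{y | TransGen r p y}, hreach p hpW, fun x hx y hy => ?_, fun S' hS hS' => ?_,
    fun x hx y hxy => hx.tail hxy⟩
  · change y ∈ {z | TransGen r x z}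
    rwa [hstable x hx]
  · ext z
    exact ⟨fun hz => (TransGen.single hpq).trans (hS' q (hS (.single hpq)) z hz), fun hz => hS hz⟩

lemma exists_source_component {W : Set α} (hfin : W.Finite) (hne : W.Nonempty)
    (hW : ∀ y ∈ W, ∀ x, r x y → x ∈ W) (hpred : ∀ y ∈ W, ∃ x, r x y) :
    ∃ S ⊆ W, IsStronglyConnected r S ∧
      (∀ S', S ⊆ S' → IsStronglyConnected r S' → S' = S) ∧ ∀ y ∈ S, ∀ x, r x y → x ∈ S := by
  simpa only [isStronglyConnected_swap] using exists_sink_component (r := swap r) hfin hne hW hpred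

end Digraph

section Invariance

variable {A : Type} {σ σ' : Sig} {G : Subgroup (Equiv.Perm A)} {α : Type}

def IsInvariant (G : Subgroup (Equiv.Perm A)) (R : Set (α → A)) : Prop :=
  ∀ g ∈ G, ∀ t ∈ R, ⇑g ∘ t ∈ R

lemma IsInvariant.comp_mem_iff {R : Set (α → A)} (hR : IsInvariant G R) {g : Equiv.Perm A}
    (hg : g ∈ G) {t : α → A} : ⇑g ∘ t ∈ R ↔ t ∈ R := by
  refine ⟨fun h => ?_, hR g hg t⟩
  have := hR g⁻¹ (inv_mem hg) _ h
  rwa [← Function.comp_assoc, ← Equiv.Perm.coe_mul, inv_mul_cancel, Equiv.Perm.coe_one,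
    Function.id_comp] at this

lemma IsInvariant.diff {R R' : Set (α → A)} (hR : IsInvariant G R) (hR' : IsInvariant G R') :
    IsInvariant G (R \ R') :=
  fun g hg t ht => ⟨hR g hg t ht.1, fun h => ht.2 ((hR'.comp_mem_iff hg).mp h)⟩

lemma IsInvariant.proj {V : Type} {Φ : Set (V → A)} (hΦ : IsInvariant G Φ) {n : ℕ}
    (u : Fin n → V) : IsInvariant G (proj u Φ) := by
  rintro g hg _ ⟨f, hf, rfl⟩
  exact ⟨_, hΦ g hg f hf, rfl⟩

lemma isInvariant_orbitOf {n : ℕ} (t : Fin n → A) : IsInvariant G (orbitOf G t) := by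
  rintro g hg _ ⟨h, hh, rfl⟩
  exact ⟨g * h, mul_mem hg hh, rfl⟩

lemma mem_orbitOf_self {n : ℕ} (t : Fin n → A) : t ∈ orbitOf G t :=
  ⟨1, one_mem G, rfl⟩

lemma IsInvariant.orbitOf_subset {n : ℕ} {R : Set (Fin n → A)} (hR : IsInvariant G R)
    {t : Fin n → A} (ht : t ∈ R) : orbitOf G t ⊆ R := by
  rintro _ ⟨g, hg, rfl⟩
  exact hR g hg t ht

lemma IsInvariant.orbitOf_subset_of_inter_nonempty {n : ℕ} {R : Set (Fin n → A)}
    (hR : IsInvariant G R) {t : Fin n → A} (h : (orbitOf G t ∩ R).Nonempty) :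
    orbitOf G t ⊆ R := by
  obtain ⟨_, ⟨g, hg, rfl⟩, hgt⟩ := h
  exact hR.orbitOf_subset ((hR.comp_mem_iff hg).mp hgt)

lemma ppDefinable.isInvariant {T : StructOn σ' A} (hT : ∀ i, IsInvariant G (T.rel i))
    {R : Set (α → A)} (hR : ppDefinable T R) : IsInvariant G R := by
  obtain ⟨m, atoms, eqs, rfl⟩ := hR
  rintro g hg t ⟨e, hatoms, heqs⟩
  have hcomp : Sum.elim (⇑g ∘ t) (⇑g ∘ e) = ⇑g ∘ Sum.elim t e := by
    funext x; cases x <;> rfl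
  refine ⟨⇑g ∘ e, fun c hc => ?_, fun p hp => ?_⟩
  · rw [hcomp]
    exact hT c.1 g hg _ (hatoms c hc)
  · simp only [hcomp, Function.comp_apply, heqs p hp]

def autGroup (S : StructOn σ A) : Subgroup (Equiv.Perm A) where
  carrier := {g | ∀ i t, t ∈ S.rel i ↔ ⇑g ∘ t ∈ S.rel i}
  one_mem' _ _ := Iff.rfl
  mul_mem' hg hh i t := (hh i t).trans (hg i _)
  inv_mem' {g} hg i t := by
    rw [hg i (⇑g⁻¹ ∘ t), ← Function.comp_assoc, ← Equiv.Perm.coe_mul, mul_inv_cancel,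
      Equiv.Perm.coe_one, Function.id_comp]

lemma autOrbit_eq_orbitOf (S : StructOn σ A) {n : ℕ} (t : Fin n → A) :
    autOrbit S t = orbitOf (autGroup S) t := by
  ext s
  constructor
  · rintro ⟨g, hg, rfl⟩
    exact ⟨Equiv.ofBijective g hg.1, hg.2, rfl⟩
  · rintro ⟨g, hg, rfl⟩
    exact ⟨g, ⟨g.bijective, hg⟩, rfl⟩

lemma foDefinable.isInvariant_autGroup {S : StructOn σ A} {R : Set (α → A)}
    (hR : foDefinable S R) : IsInvariant (autGroup S) R := by
  let _ := structureOf S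
  rw [foDefinable, Set.empty_definable_iff] at hR
  obtain ⟨ψ, rfl⟩ := hR
  intro g hg t ht
  let e : (sigLang σ).Equiv A A :=
    { toEquiv := g
      map_fun' := fun F _ => F.elim
      map_rel' := fun r x => (hg r.1 (fun j => x (Fin.cast r.2 j))).symm }
  exact (FirstOrder.Language.StrongHomClass.realize_formula e ψ (v := t)).2 ht

lemma le_autGroup_canonStruct (k : ℕ) : G ≤ autGroup (canonStruct G k) := by
  rintro g hg ⟨O, w, rfl⟩ t
  exact ((isInvariant_orbitOf w).comp_mem_iff hg).symm

lemma orbitOf_autGroup_canonStruct {k : ℕ} (t : Fin k → A) :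
    orbitOf (autGroup (canonStruct G k)) t = orbitOf G t := by
  refine subset_antisymm ?_ ?_
  · refine IsInvariant.orbitOf_subset (fun g hg s hs => ?_) (mem_orbitOf_self t)
    exact (hg ⟨orbitOf G t, t, rfl⟩ s).mp hs
  · rintro _ ⟨g, hg, rfl⟩
    exact ⟨g, le_autGroup_canonStruct k hg, rfl⟩

end Invariance

section ImplicationDigraph

variable {A : Type} {σ : Sig} {k : ℕ} {Bst : StructOn σ A} {φ : ImplData A k k}

lemma mem_autOrbit_self {n : ℕ} (t : Fin n → A) : t ∈ autOrbit Bst t := by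
  rw [autOrbit_eq_orbitOf]
  exact mem_orbitOf_self t

lemma autOrbit_mem_vertOf {R : Set (Fin k → A)} (hR : IsInvariant (autGroup Bst) R)
    {t : Fin k → A} (ht : t ∈ R) : autOrbit Bst t ∈ VertOf Bst R := by
  refine ⟨⟨t, rfl⟩, ?_⟩
  rw [autOrbit_eq_orbitOf]
  exact hR.orbitOf_subset ht

lemma IsAutOrbit.subset_of_inter_nonempty {O R : Set (Fin k → A)} (hO : IsAutOrbit Bst O)
    (hR : IsInvariant (autGroup Bst) R) (h : (O ∩ R).Nonempty) : O ⊆ R := by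
  obtain ⟨t, rfl⟩ := hO
  rw [autOrbit_eq_orbitOf] at h ⊢
  exact hR.orbitOf_subset_of_inter_nonempty h

lemma vertOf_mono {R R' : Set (Fin k → A)} (h : R ⊆ R') : VertOf Bst R ⊆ VertOf Bst R' :=
  fun _ hO => ⟨hO.1, hO.2.trans h⟩

lemma Oligomorphic.finite_vertOf {G : Subgroup (Equiv.Perm A)} (hG : Oligomorphic G)
    (R : Set (Fin k → A)) : (VertOf (canonStruct G k) R).Finite := by
  refine (hG k).subset ?_
  rintro _ ⟨⟨t, rfl⟩, -⟩
  exact ⟨t, by rw [autOrbit_eq_orbitOf, orbitOf_autGroup_canonStruct]⟩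

lemma exists_arcOn_of_mem_vertOf (hΦ : IsInvariant (autGroup Bst) φ.Φ)
    (hE : proj φ.u φ.Φ = proj φ.v φ.Φ) {O : Set (Fin k → A)}
    (hO : O ∈ VertOf Bst (proj φ.u φ.Φ)) : ∃ P, ArcOn Bst φ (proj φ.u φ.Φ) O P := by
  obtain ⟨t, rfl⟩ := hO.1
  obtain ⟨f, hf, rfl⟩ := hO.2 (mem_autOrbit_self t)
  have hfv : f ∘ φ.v ∈ proj φ.u φ.Φ := hE ▸ ⟨f, hf, rfl⟩
  exact ⟨_, hO, autOrbit_mem_vertOf (hΦ.proj φ.u) hfv, f, hf,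
    mem_autOrbit_self _, mem_autOrbit_self _⟩

lemma exists_arcOn_to_mem_vertOf (hΦ : IsInvariant (autGroup Bst) φ.Φ)
    (hE : proj φ.u φ.Φ = proj φ.v φ.Φ) {P : Set (Fin k → A)}
    (hP : P ∈ VertOf Bst (proj φ.u φ.Φ)) : ∃ O, ArcOn Bst φ (proj φ.u φ.Φ) O P := by
  obtain ⟨t, rfl⟩ := hP.1
  obtain ⟨f, hf, rfl⟩ : t ∈ proj φ.v φ.Φ := hE ▸ hP.2 (mem_autOrbit_self t)
  exact ⟨_, autOrbit_mem_vertOf (hΦ.proj φ.u) ⟨f, hf, rfl⟩, hP, f, hf,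
    mem_autOrbit_self _, mem_autOrbit_self _⟩

lemma ArcOn.mem_vertOf_right {C E O P : Set (Fin k → A)} (h : ArcOn Bst φ E O P)
    (hC : IsInvariant (autGroup Bst) C) (hfwd : ∀ f ∈ φ.Φ, f ∘ φ.u ∈ C → f ∘ φ.v ∈ C)
    (hO : O ∈ VertOf Bst C) : P ∈ VertOf Bst C := by
  obtain ⟨-, hP, f, hf, hfu, hfv⟩ := h
  exact ⟨hP.1, hP.1.subset_of_inter_nonempty hC ⟨_, hfv, hfwd f hf (hO.2 hfu)⟩⟩

lemma ArcOn.mem_vertOf_diff_left {C E O P : Set (Fin k → A)} (h : ArcOn Bst φ E O P)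
    (hC : IsInvariant (autGroup Bst) C) (hfwd : ∀ f ∈ φ.Φ, f ∘ φ.u ∈ C → f ∘ φ.v ∈ C)
    (hP : P ∈ VertOf Bst (E \ C)) : O ∈ VertOf Bst (E \ C) := by
  obtain ⟨hO, -, f, hf, hfu, hfv⟩ := h
  refine ⟨hO.1, fun x hx => ⟨hO.2 hx, fun hxC => ?_⟩⟩
  have hOC : O ⊆ C := hO.1.subset_of_inter_nonempty hC ⟨x, hx, hxC⟩
  exact (hP.2 hfv).2 (hfwd f hf (hOC hfu))

end ImplicationDigraph

end CSPPaper

open CSPPaper in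
theorem stmt14_general {A : Type} (k : ℕ) (G : Subgroup (Equiv.Perm A))
    (hG : Neoliberal G k)
    {σ' : Sig} (Astr : StructOn σ' A)
    (hexp : IsFOExpansion (canonStruct G k) Astr)
    (C : Set (Fin k → A))
    (φ : ImplData A k k) (himpl : φ.IsImplication Astr C C)
    (hE : proj φ.u φ.Φ = proj φ.v φ.Φ) :
    (∃ S1 : Set (Set (Fin k → A)), (∀ O ∈ S1, O ⊆ C) ∧
      IsSCC (canonStruct G k) φ (proj φ.u φ.Φ) S1 ∧
      IsSink (canonStruct G k) φ (proj φ.u φ.Φ) S1) ∧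
    (∃ S2 : Set (Set (Fin k → A)), (∀ O ∈ S2, O ⊆ proj φ.u φ.Φ \ C) ∧
      IsSCC (canonStruct G k) φ (proj φ.u φ.Φ) S2 ∧
      IsSource (canonStruct G k) φ (proj φ.u φ.Φ) S2) ∧
    ∀ O ∈ VertOf (canonStruct G k) (proj φ.u φ.Φ),
      (∃ P, ArcOn (canonStruct G k) φ (proj φ.u φ.Φ) O P) ∧
      (∃ P, ArcOn (canonStruct G k) φ (proj φ.u φ.Φ) P O) := by
  obtain ⟨himpl, -⟩ := himpl
  set E := proj φ.u φ.Φ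
  have hinv : ∀ {α : Type} {R : Set (α → A)}, ppDefinable Astr R →
      IsInvariant (autGroup (canonStruct G k)) R :=
    fun hR => hR.isInvariant fun i => (hexp.2 i).isInvariant_autGroup
  have hΦ := hinv himpl.Φ_pp
  have hC := hinv himpl.C_pp
  have hCE : C ⊆ E := himpl.C_proper.subset
  refine ⟨?_, ?_, fun O hO => ⟨exists_arcOn_of_mem_vertOf hΦ hE hO,
    exists_arcOn_to_mem_vertOf hΦ hE hO⟩⟩
  · obtain ⟨a, ha⟩ := himpl.C_ne
    obtain ⟨S, hSC, hconn, hmax, hsink⟩ := exists_sink_component (hG.1.finite_vertOf C)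
      ⟨_, autOrbit_mem_vertOf hC ha⟩ (fun _ hO _ hOP => hOP.mem_vertOf_right hC himpl.forward hO)
      (fun _ hO => exists_arcOn_of_mem_vertOf hΦ hE (vertOf_mono hCE hO))
    exact ⟨S, fun O hO => (hSC hO).2, ⟨hSC.trans (vertOf_mono hCE), hconn,
      fun S' hS _ hS' => hmax S' hS hS'⟩, hsink⟩
  · obtain ⟨a, ha⟩ := Set.nonempty_of_ssubset himpl.C_proper
    obtain ⟨S, hSC, hconn, hmax, hsource⟩ := exists_source_component (hG.1.finite_vertOf (E \ C))
      ⟨_, autOrbit_mem_vertOf ((hΦ.proj φ.u).diff hC) ha⟩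
      (fun _ hP _ hOP => hOP.mem_vertOf_diff_left hC himpl.forward hP)
      (fun _ hP => exists_arcOn_to_mem_vertOf hΦ hE (vertOf_mono sdiff_subset hP))
    exact ⟨S, fun O hO => (hSC hO).2, ⟨hSC.trans (vertOf_mono sdiff_subset), hconn,
      fun S' hS _ hS' => hmax S' hS hS'⟩, hsource⟩

open CSPPaper in
/-- Observation 3.21: existence of a sink SCC inside `Vert(C)` and a
source SCC inside `Vert(E∖C)`, and smoothness of the digraph `B_φ`. -/
theorem stmt14 {A : Type} (k : ℕ) (hk : 3 ≤ k) (G : Subgroup (Equiv.Perm A))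
    (hG : Neoliberal G k)
    {σ' : Sig} (Astr : StructOn σ' A)
    (hexp : IsFOExpansion (canonStruct G k) Astr)
    (C : Set (Fin k → A)) (hC : C.Nonempty)
    (φ : ImplData A k k) (himpl : φ.IsImplication Astr C C)
    (hE : proj φ.u φ.Φ = proj φ.v φ.Φ) :
    (∃ S1 : Set (Set (Fin k → A)), (∀ O ∈ S1, O ⊆ C) ∧
      IsSCC (canonStruct G k) φ (proj φ.u φ.Φ) S1 ∧
      IsSink (canonStruct G k) φ (proj φ.u φ.Φ) S1) ∧
    (∃ S2 : Set (Set (Fin k → A)), (∀ O ∈ S2, O ⊆ proj φ.u φ.Φ \ C) ∧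
      IsSCC (canonStruct G k) φ (proj φ.u φ.Φ) S2 ∧
      IsSource (canonStruct G k) φ (proj φ.u φ.Φ) S2) ∧
    ∀ O ∈ VertOf (canonStruct G k) (proj φ.u φ.Φ),
      (∃ P, ArcOn (canonStruct G k) φ (proj φ.u φ.Φ) O P) ∧
      (∃ P, ArcOn (canonStruct G k) φ (proj φ.u φ.Φ) P O) :=
  stmt14_general k G hG Astr hexp C φ himpl hE
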